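/- arXiv:2204.08274 — 7 statements merged into one kernel-verified Lean document; each statement's English description precedes it below -/
import Mathlib

section
/- Let W ∈ ℝ^{m×m} be symmetric with O ⪯ W ⪯ I, let A ∈ ℝ^{m×n}, and set c = ⟨W, AAᵀ⟩⁻¹ (assuming ⟨W, AAᵀ⟩ > 0). Then the matrix W' = W - c·W A Aᵀ W satisfies O ⪯ W' ⪯ W. -/
open Matrix

/-! Write `B = W A Aᵀ W`. For every `x`,
`xᵀ B x = ∑ⱼ ⟪aⱼ, x⟫_W ²` where `aⱼ` are the columns of `A` and `⟪u, v⟫_W = uᵀ W v` is the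
semi-inner product of `W`. Cauchy–Schwarz for `⟪·,·⟫_W` bounds this by
`(∑ⱼ ⟪aⱼ, aⱼ⟫_W) ⟪x, x⟫_W = ⟨W, AAᵀ⟩ · xᵀ W x`, which is exactly `c • B ⪯ W`; and `O ⪯ c • B`
because `B` is a Gram matrix. -/

namespace Matrix

variable {ι κ : Type*} [Fintype ι] [Fintype κ]

theorem PosSemidef.dotProduct_mulVec_sq_le {W : Matrix ι ι ℝ} (hW : W.PosSemidef)
    (x y : ι → ℝ) : (x ⬝ᵥ W *ᵥ y) ^ 2 ≤ (x ⬝ᵥ W *ᵥ x) * (y ⬝ᵥ W *ᵥ y) := by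
  let _ := W.toSeminormedAddCommGroup hW
  let _ := W.toInnerProductSpace hW
  have inner_eq (u v : ι → ℝ) : inner ℝ u v = u ⬝ᵥ W *ᵥ v := by
    change (W *ᵥ v) ⬝ᵥ star u = _
    rw [star_trivial, dotProduct_comm]
  simpa only [inner_eq, sq] using real_inner_mul_inner_self_le x y

theorem trace_transpose_mul_mul_transpose (W : Matrix ι ι ℝ) (A : Matrix ι κ ℝ) :
    (Wᵀ * (A * Aᵀ)).trace = ∑ j, Aᵀ j ⬝ᵥ W *ᵥ Aᵀ j := by
  rw [← Matrix.mul_assoc, trace_mul_comm, ← Matrix.mul_assoc]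
  simp only [trace, diag, mul_apply, dotProduct, mulVec, transpose_apply, Finset.mul_sum,
    Finset.sum_mul]
  exact Finset.sum_congr rfl fun _ _ => Finset.sum_congr rfl fun _ _ =>
    Finset.sum_congr rfl fun _ _ => by ring

theorem dotProduct_transpose_mul_mul_transpose_mul_mulVec (W : Matrix ι ι ℝ)
    (A : Matrix ι κ ℝ) (x : ι → ℝ) :
    x ⬝ᵥ (Wᵀ * A * Aᵀ * W) *ᵥ x = ∑ j, (Aᵀ j ⬝ᵥ W *ᵥ x) ^ 2 := by
  rw [← mulVec_mulVec, ← mulVec_mulVec, ← mulVec_mulVec, dotProduct_mulVec,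
    ← mulVec_transpose, transpose_transpose, dotProduct_mulVec, ← mulVec_transpose]
  simp only [dotProduct, mulVec, sq]

theorem PosSemidef.dotProduct_transpose_mul_mul_transpose_mul_mulVec_le
    {W : Matrix ι ι ℝ} (hW : W.PosSemidef) (A : Matrix ι κ ℝ) (x : ι → ℝ) :
    x ⬝ᵥ (Wᵀ * A * Aᵀ * W) *ᵥ x ≤ (Wᵀ * (A * Aᵀ)).trace * (x ⬝ᵥ W *ᵥ x) := by
  rw [dotProduct_transpose_mul_mul_transpose_mul_mulVec, trace_transpose_mul_mul_transpose,
    Finset.sum_mul]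
  exact Finset.sum_le_sum fun j _ => hW.dotProduct_mulVec_sq_le (Aᵀ j) x

theorem PosSemidef.trace_transpose_mul_mul_transpose_nonneg {W : Matrix ι ι ℝ}
    (hW : W.PosSemidef) (A : Matrix ι κ ℝ) : 0 ≤ (Wᵀ * (A * Aᵀ)).trace := by
  rw [trace_transpose_mul_mul_transpose]
  exact Finset.sum_nonneg fun j _ => hW.dotProduct_mulVec_nonneg (Aᵀ j)

theorem PosSemidef.sub_inv_smul_of_dotProduct_mulVec_le {W B : Matrix ι ι ℝ}
    (hW : W.PosSemidef) (hB : B.IsHermitian)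
    {t : ℝ} (ht : 0 ≤ t) (hBW : ∀ x, x ⬝ᵥ B *ᵥ x ≤ t * (x ⬝ᵥ W *ᵥ x)) :
    (W - t⁻¹ • B).PosSemidef := by
  refine .of_dotProduct_mulVec_nonneg (hW.isHermitian.sub (hB.smul (.all t⁻¹))) fun x => ?_
  rw [star_trivial, sub_mulVec, dotProduct_sub, smul_mulVec, dotProduct_smul, smul_eq_mul,
    sub_nonneg]
  exact inv_mul_le_of_le_mul₀ ht (hW.dotProduct_mulVec_nonneg x) (hBW x)

theorem posSemidef_mul_mul_transpose_mul {W : Matrix ι ι ℝ} (hW : W.IsSymm)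
    (A : Matrix ι κ ℝ) : (W * A * Aᵀ * W).PosSemidef := by
  simpa [Matrix.mul_assoc, hW.eq] using posSemidef_self_mul_conjTranspose (W * A)

end Matrix

theorem weight_update_posSemidef_general (m n : ℕ)
    (W : Matrix (Fin m) (Fin m) ℝ) (A : Matrix (Fin m) (Fin n) ℝ)
    (hW : W.PosSemidef) :
    ((W - ((Wᵀ * (A * Aᵀ)).trace)⁻¹ • (W * A * Aᵀ * W)).PosSemidef) ∧
      (W - (W - ((Wᵀ * (A * Aᵀ)).trace)⁻¹ • (W * A * Aᵀ * W))).PosSemidef := by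
  have hWsymm : W.IsSymm := isHermitian_iff_isSymm.1 hW.isHermitian
  have hB := posSemidef_mul_mul_transpose_mul hWsymm A
  have hT := hW.trace_transpose_mul_mul_transpose_nonneg A
  refine ⟨hW.sub_inv_smul_of_dotProduct_mulVec_le hB.isHermitian hT fun x => ?_, ?_⟩
  · simpa only [hWsymm.eq] using hW.dotProduct_transpose_mul_mul_transpose_mul_mulVec_le A x
  · rw [sub_sub_cancel]
    exact hB.smul (inv_nonneg.2 hT)

/-- Let W be symmetric with O ⪯ W ⪯ I, A ∈ ℝ^{m×n}, ⟨W, AAᵀ⟩ > 0 and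
    c = ⟨W, AAᵀ⟩⁻¹.  Then W' = W - c · W A Aᵀ W satisfies O ⪯ W' ⪯ W. -/
theorem weight_update_posSemidef (m n : ℕ)
    (W : Matrix (Fin m) (Fin m) ℝ) (A : Matrix (Fin m) (Fin n) ℝ)
    (hWsym : W.IsSymm) (hW : W.PosSemidef) (hWI : (1 - W).PosSemidef)
    (hpos : 0 < (Wᵀ * (A * Aᵀ)).trace) :
    ((W - ((Wᵀ * (A * Aᵀ)).trace)⁻¹ • (W * A * Aᵀ * W)).PosSemidef) ∧
      (W - (W - ((Wᵀ * (A * Aᵀ)).trace)⁻¹ • (W * A * Aᵀ * W))).PosSemidef :=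
  weight_update_posSemidef_general m n W A hW
end

section
/- Let g: ℝⁿ → ℝ be differentiable, x ∈ ℝⁿ with support S (|S| = s'), η > 0, and let x̄ = x - η∇g(x). Let x' = H_{s'}(x̄) have support S' with A = S'\S (inserted indices) and B = S\S' (removed indices). Then for any sets A' ⊆ [n]\S and B' ⊆ S with |A'| = |B'|, it holds that -‖η∇_A g(x)‖₂² + ‖x̄_B‖₂² ≤ -‖η∇_{A'} g(x)‖₂² + ‖x̄_{B'}‖₂². -/
/-!
Off the support `S` of `x` we have `x̄ = -η∇g(x)`, so both sides only involve the squares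
`x̄ᵢ²`. Exchanging `B'` for `A'` turns `S` into another set `A' ∪ (S \ B')` of `s'` indices,
whose `x̄²`-mass is at most that of `S'`, because `S'` collects `s'` largest entries of `|x̄|`.
Subtracting the common part `S ∩ S'` gives the inequality.
-/

open Finset

namespace Finset

variable {ι M : Type*} {f : ι → M}

section OrderedMonoid

variable [AddCommMonoid M] [LinearOrder M] [IsOrderedAddMonoid M]

lemma sum_le_sum_of_card_eq_of_forall_le {U V : Finset ι} (hcard : #U = #V)
    (hle : ∀ i ∈ U, ∀ j ∈ V, f i ≤ f j) : ∑ i ∈ U, f i ≤ ∑ j ∈ V, f j := by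
  rcases U.eq_empty_or_nonempty with rfl | hU
  · simp [card_eq_zero.1 hcard.symm]
  obtain ⟨i₀, hi₀, hmax⟩ := exists_max_image U f hU
  calc ∑ i ∈ U, f i ≤ #U • f i₀ := sum_le_card_nsmul _ _ _ hmax
    _ = #V • f i₀ := by rw [hcard]
    _ ≤ ∑ j ∈ V, f j := card_nsmul_le_sum _ _ _ fun j hj => hle i₀ hi₀ j hj

lemma sum_le_sum_of_card_eq_of_forall_notMem_le [DecidableEq ι] {T S : Finset ι}
    (hcard : #T = #S) (htop : ∀ i ∈ S, ∀ j ∉ S, f j ≤ f i) :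
    ∑ i ∈ T, f i ≤ ∑ i ∈ S, f i := by
  rw [← sum_inter_add_sum_sdiff T S, ← sum_inter_add_sum_sdiff S T, inter_comm]
  exact add_le_add_right (sum_le_sum_of_card_eq_of_forall_le (card_sdiff_comm hcard)
    fun i hi j hj => htop j (mem_sdiff.1 hj).1 i (mem_sdiff.1 hi).2) _

end OrderedMonoid

lemma neg_sum_sdiff_add_sum_sdiff_le [AddCommGroup M] [LinearOrder M] [IsOrderedAddMonoid M]
    [DecidableEq ι] {S S' A' B' : Finset ι} (hcard : #S = #S')
    (htop : ∀ i ∈ S', ∀ j ∉ S', f j ≤ f i) (hA' : Disjoint A' S) (hB' : B' ⊆ S)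
    (hcard' : #A' = #B') :
    -∑ i ∈ S' \ S, f i + ∑ i ∈ S \ S', f i ≤ -∑ i ∈ A', f i + ∑ i ∈ B', f i := by
  have hdisj : Disjoint A' (S \ B') := hA'.mono_right sdiff_subset
  have hcardT : #(A' ∪ (S \ B')) = #S' := by
    rw [card_union_of_disjoint hdisj, card_sdiff_of_subset hB', hcard', ← hcard,
      Nat.add_sub_cancel' (card_le_card hB')]
  have key := sum_le_sum_of_card_eq_of_forall_notMem_le hcardT htop
  rw [sum_union hdisj, sum_sdiff_eq_sub hB', ← sum_inter_add_sum_sdiff S S',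
    ← sum_inter_add_sum_sdiff S' S, inter_comm] at key
  rw [← sub_nonneg] at key ⊢
  convert key using 1
  abel

end Finset

theorem iht_exchange_general (n : ℕ) (g : EuclideanSpace ℝ (Fin n) → ℝ)
    (x : EuclideanSpace ℝ (Fin n)) (η : ℝ)
    (s' : ℕ) (S S' : Finset (Fin n))
    (hcardS : S.card = s') (hcardS' : S'.card = s')
    (hsupp : ∀ i, x i ≠ 0 ↔ i ∈ S)
    (xbar : EuclideanSpace ℝ (Fin n))
    (hxbar : xbar = x - η • gradient g x)
    (htop : ∀ i ∈ S', ∀ j ∉ S', |xbar j| ≤ |xbar i|)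
    (A B : Finset (Fin n)) (hA : A = S' \ S) (hB : B = S \ S')
    (A' B' : Finset (Fin n)) (hA' : A' ⊆ Sᶜ) (hB' : B' ⊆ S)
    (hcard : A'.card = B'.card) :
    -(∑ i ∈ A, (η * gradient g x i) ^ 2) + ∑ i ∈ B, xbar i ^ 2 ≤
      -(∑ i ∈ A', (η * gradient g x i) ^ 2) + ∑ i ∈ B', xbar i ^ 2 := by
  have hsq_off : ∀ i ∉ S, (η * gradient g x i) ^ 2 = xbar i ^ 2 := by
    intro i hi
    have hx : x i = 0 := not_not.1 (mt (hsupp i).1 hi)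
    simp [hxbar, hx]
  subst hA hB
  rw [sum_congr rfl fun i hi => hsq_off i (mem_sdiff.1 hi).2,
    sum_congr rfl fun i hi => hsq_off i (mem_compl.1 (hA' hi))]
  exact neg_sum_sdiff_add_sum_sdiff_le (hcardS.trans hcardS'.symm)
    (fun i hi j hj => sq_le_sq.2 (htop i hi j hj)) (subset_compl_iff_disjoint_right.1 hA') hB'
    hcard

/-- IHT exchange lemma.  Let g be differentiable, x have support S with
    |S| = s', x̄ = x - η∇g(x), and let S' (with |S'| = s') be the support of
    x' = H_{s'}(x̄), i.e. a set of s' indices of largest magnitude of x̄.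
    Set A = S' \ S and B = S \ S'.  Then for any A' ⊆ Sᶜ and B' ⊆ S with
    |A'| = |B'|,
      -‖η∇_A g(x)‖₂² + ‖x̄_B‖₂² ≤ -‖η∇_{A'} g(x)‖₂² + ‖x̄_{B'}‖₂². -/
theorem iht_exchange (n : ℕ) (g : EuclideanSpace ℝ (Fin n) → ℝ)
    (hg : Differentiable ℝ g)
    (x : EuclideanSpace ℝ (Fin n)) (η : ℝ) (hη : 0 < η)
    (s' : ℕ) (S S' : Finset (Fin n))
    (hcardS : S.card = s') (hcardS' : S'.card = s')
    (hsupp : ∀ i, x i ≠ 0 ↔ i ∈ S)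
    (xbar : EuclideanSpace ℝ (Fin n))
    (hxbar : xbar = x - η • gradient g x)
    (htop : ∀ i ∈ S', ∀ j ∉ S', |xbar j| ≤ |xbar i|)
    (A B : Finset (Fin n)) (hA : A = S' \ S) (hB : B = S \ S')
    (A' B' : Finset (Fin n)) (hA' : A' ⊆ Sᶜ) (hB' : B' ⊆ S)
    (hcard : A'.card = B'.card) :
    -(∑ i ∈ A, (η * gradient g x i) ^ 2) + ∑ i ∈ B, xbar i ^ 2 ≤
      -(∑ i ∈ A', (η * gradient g x i) ^ 2) + ∑ i ∈ B', xbar i ^ 2 :=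
  iht_exchange_general n g x η s' S S' hcardS hcardS' hsupp xbar hxbar htop A B hA hB A' B' hA' hB'
    hcard
end

section
/- Let f: ℝⁿ → ℝ be α-strongly convex and let g(x) = f(x) + (β/2)‖x‖²_{w,2} where w ∈ [0,1]ⁿ and ‖x‖²_{w,2} = Σᵢ wᵢxᵢ². Then for any x, x* ∈ ℝⁿ: f(x*) - f(x) ≥ -α⁻¹‖∇_{S∪S*} g(x)‖₂² - β⟨wx, x* - x⟩ + (α/4)‖x* - x‖₂², where S = supp(x), S* = supp(x*), wx denotes the entrywise product, and ∇_T g(x) = (∇g(x))_T. -/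
/-!
The gradient of the regularizer `(β/2) ∑ wᵢ yᵢ²` at `x` is `β (w ⊙ x)`, so
`⟪∇f x, x* - x⟫ = ⟪∇g x, x* - x⟫ - β ⟪w ⊙ x, x* - x⟫`. Since `x* - x` vanishes off `S ∪ S*`,
the first inner product only involves the coordinates of `∇g x` in `S ∪ S*`, and coordinatewise
Young's inequality `ab ≥ -α⁻¹a² - (α/4)b²` spends half of the strong-convexity term
`(α/2)‖x* - x‖²`.
-/

open Finset

theorem HasGradientAt.add {𝕜 F : Type*} [RCLike 𝕜] [NormedAddCommGroup F] [InnerProductSpace 𝕜 F]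
    [CompleteSpace F] {f g : F → 𝕜} {f' g' x : F}
    (hf : HasGradientAt f f' x) (hg : HasGradientAt g g' x) :
    HasGradientAt (fun y => f y + g y) (f' + g') x := by
  rw [hasGradientAt_iff_hasFDerivAt] at *
  simpa only [map_add] using hf.fun_add hg

theorem neg_inv_mul_sq_sub_le_mul {α : ℝ} (hα : 0 < α) (a b : ℝ) :
    -α⁻¹ * a ^ 2 - α / 4 * b ^ 2 ≤ a * b := by
  have := mul_nonneg (inv_nonneg.mpr hα.le) (sq_nonneg (a + α / 2 * b))
  have : α⁻¹ * (a + α / 2 * b) ^ 2 = α⁻¹ * a ^ 2 + a * b + α / 4 * b ^ 2 := by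
    field_simp; ring
  linarith

theorem neg_inv_mul_sum_sq_sub_le_sum_mul {ι : Type*} {α : ℝ} (hα : 0 < α) (T : Finset ι)
    (a b : ι → ℝ) :
    -α⁻¹ * ∑ i ∈ T, a i ^ 2 - α / 4 * ∑ i ∈ T, b i ^ 2 ≤ ∑ i ∈ T, a i * b i := by
  rw [mul_sum, mul_sum, ← sum_sub_distrib]
  exact sum_le_sum fun i _ => neg_inv_mul_sq_sub_le_mul hα (a i) (b i)

section

variable {ι : Type*} [Fintype ι]

theorem hasGradientAt_half_mul_weighted_sum_sq (β : ℝ) (w : ι → ℝ) (x : EuclideanSpace ℝ ι) :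
    HasGradientAt (fun y : EuclideanSpace ℝ ι => β / 2 * ∑ i, w i * y i ^ 2)
      (WithLp.toLp 2 fun i => β * (w i * x i)) x := by
  have hcoord (i : ι) := ((EuclideanSpace.proj (𝕜 := ℝ) i).hasFDerivAt (x := x)).pow 2
  have hderiv := (HasFDerivAt.fun_sum fun i (_ : i ∈ univ) => (hcoord i).const_mul (w i)).const_mul
    (β / 2)
  rw [hasGradientAt_iff_hasFDerivAt]
  refine hderiv.congr_fderiv ?_
  ext y
  simp only [PiLp.proj_apply, Nat.add_one_sub_one, pow_one, nsmul_eq_mul, Nat.cast_ofNat, smul_apply,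
    _root_.sum_apply, smul_eq_mul, mul_sum, InnerProductSpace.toDual_apply_apply, PiLp.inner_apply,
    RCLike.inner_apply, Real.ringHom_apply]
  exact sum_congr rfl fun i _ => by ring

theorem EuclideanSpace.real_inner_eq_sum_of_eq_zero_off {T : Finset ι} (u v : EuclideanSpace ℝ ι)
    (hv : ∀ i ∉ T, v i = 0) : inner ℝ u v = ∑ i ∈ T, u i * v i := by
  rw [PiLp.inner_apply, ← sum_subset (subset_univ T) fun i _ hi => by simp [hv i hi]]
  simp [mul_comm]

theorem EuclideanSpace.norm_sq_eq_sum_of_eq_zero_off {T : Finset ι} (v : EuclideanSpace ℝ ι)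
    (hv : ∀ i ∉ T, v i = 0) : ‖v‖ ^ 2 = ∑ i ∈ T, v i ^ 2 := by
  simp_rw [← real_inner_self_eq_norm_sq, real_inner_eq_sum_of_eq_zero_off v v hv, sq]

end

theorem strong_convexity_regularized_bound_general (n : ℕ)
    (f : EuclideanSpace ℝ (Fin n) → ℝ) (hf : Differentiable ℝ f)
    (α β : ℝ) (hα : 0 < α)
    (hstrong : ∀ x y : EuclideanSpace ℝ (Fin n),
      f y ≥ f x + (inner ℝ (gradient f x) (y - x) : ℝ) + (α / 2) * ‖y - x‖ ^ 2)
    (w : Fin n → ℝ)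
    (g : EuclideanSpace ℝ (Fin n) → ℝ)
    (hg : ∀ x : EuclideanSpace ℝ (Fin n), g x = f x + (β / 2) * ∑ i, w i * x i ^ 2)
    (x xstar : EuclideanSpace ℝ (Fin n))
    (S Sstar : Finset (Fin n))
    (hS : ∀ i, x i ≠ 0 ↔ i ∈ S) (hSstar : ∀ i, xstar i ≠ 0 ↔ i ∈ Sstar) :
    f xstar - f x ≥
      -α⁻¹ * (∑ i ∈ S ∪ Sstar, (gradient g x i) ^ 2)
        - β * (∑ i, w i * x i * (xstar i - x i))
        + (α / 4) * ‖xstar - x‖ ^ 2 := by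
  set v : EuclideanSpace ℝ (Fin n) := WithLp.toLp 2 fun i => β * (w i * x i)
  have hgrad : gradient g x = gradient f x + v := by
    rw [show g = _ from funext hg]
    exact ((hf x).hasGradientAt.add (hasGradientAt_half_mul_weighted_sum_sq β w x)).gradient
  have hsupp : ∀ i ∉ S ∪ Sstar, (xstar - x) i = 0 := fun i hi => by
    simp only [mem_union, ← hS, ← hSstar, not_or, not_not] at hi
    simp [hi.1, hi.2]
  have hinner : inner ℝ (gradient g x) (xstar - x) =
      inner ℝ (gradient f x) (xstar - x) + β * ∑ i, w i * x i * (xstar i - x i) := by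
    rw [hgrad, inner_add_left, add_right_inj]
    simp only [PiLp.inner_apply, RCLike.inner_apply, conj_trivial, PiLp.sub_apply, mul_sum]
    exact sum_congr rfl fun i _ => by ring
  have hyoung : -α⁻¹ * ∑ i ∈ S ∪ Sstar, gradient g x i ^ 2 - α / 4 * ‖xstar - x‖ ^ 2 ≤
      inner ℝ (gradient g x) (xstar - x) := by
    rw [EuclideanSpace.norm_sq_eq_sum_of_eq_zero_off _ hsupp,
      EuclideanSpace.real_inner_eq_sum_of_eq_zero_off _ _ hsupp]
    exact neg_inv_mul_sum_sq_sub_le_sum_mul hα _ _ _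
  linarith [hstrong x xstar]

/-- Strong convexity step bound for the regularized function.  Let f be
    differentiable and α-strongly convex, w ∈ [0,1]ⁿ, and
    g(x) = f(x) + (β/2)·Σᵢ wᵢ xᵢ².  Then for any x, x* with supports S, S*:
    f(x*) - f(x) ≥ -α⁻¹‖∇_{S∪S*} g(x)‖₂² - β⟨wx, x*-x⟩ + (α/4)‖x*-x‖₂². -/
theorem strong_convexity_regularized_bound (n : ℕ)
    (f : EuclideanSpace ℝ (Fin n) → ℝ) (hf : Differentiable ℝ f)
    (α β : ℝ) (hα : 0 < α) (hβ : 0 < β)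
    (hstrong : ∀ x y : EuclideanSpace ℝ (Fin n),
      f y ≥ f x + (inner ℝ (gradient f x) (y - x) : ℝ) + (α / 2) * ‖y - x‖ ^ 2)
    (w : Fin n → ℝ) (hw : ∀ i, 0 ≤ w i ∧ w i ≤ 1)
    (g : EuclideanSpace ℝ (Fin n) → ℝ)
    (hg : ∀ x : EuclideanSpace ℝ (Fin n), g x = f x + (β / 2) * ∑ i, w i * x i ^ 2)
    (x xstar : EuclideanSpace ℝ (Fin n))
    (S Sstar : Finset (Fin n))
    (hS : ∀ i, x i ≠ 0 ↔ i ∈ S) (hSstar : ∀ i, xstar i ≠ 0 ↔ i ∈ Sstar) :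
    f xstar - f x ≥
      -α⁻¹ * (∑ i ∈ S ∪ Sstar, (gradient g x i) ^ 2)
        - β * (∑ i, w i * x i * (xstar i - x i))
        + (α / 4) * ‖xstar - x‖ ^ 2 :=
  strong_convexity_regularized_bound_general n f hf α β hα hstrong w g hg x xstar S Sstar hS hSstar
end

section
/- Let κ ≥ 1 and s ≥ 1 be integers, let n = s(κ² + κ + 1), and fix δ ∈ (0, 1/4). Define the diagonal matrix A ∈ ℝ^{n×n} with A_{ii} = 1 for i ∈ I₁ = [1,s], A_{ii} = √κ for i ∈ I₂ = [s+1, s(κ+1)], A_{ii} = 1 for i ∈ I₃ = [s(κ+1)+1, n], and b ∈ ℝⁿ with bᵢ = κ√(1-4δ) on I₁, bᵢ = √κ·√(1-2δ) on I₂, bᵢ = 1 on I₃. Let f(x) = (1/2)‖Ax - b‖₂². Let S ⊆ I₃ with |S| = s' ≤ 0.6sκ², and define x by xᵢ = 1 for i ∈ S and 0 otherwise. Then x = H_{s'}(x - (1/κ)∇f(x)), i.e. x is a fixpoint of IHT with step size 1/β where β = κ is the smoothness constant of f. -/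
/-!
The gradient of `½ ∑ (dᵢ zᵢ - bᵢ)²` is `(dᵢ (dᵢ xᵢ - bᵢ))ᵢ`. On `S ⊆ I₃` the residual
`dᵢ xᵢ - bᵢ = 1 - 1` vanishes, so the gradient step leaves `x` unchanged there. Off `S`,
`xⱼ = 0` and the step produces `κ⁻¹ dⱼ bⱼ`, which is `√(1 - 4δ)`, `√(1 - 2δ)` or `κ⁻¹`
on the three blocks: at most `1` in every case.
-/

open Finset

theorem hasGradientAt_half_sum_sq {ι : Type*} [Fintype ι] (d b : ι → ℝ)
    (x : EuclideanSpace ℝ ι) :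
    HasGradientAt (fun z : EuclideanSpace ℝ ι => 1 / 2 * ∑ i, (d i * z i - b i) ^ 2)
      (WithLp.toLp 2 fun i => d i * (d i * x i - b i)) x := by
  rw [hasGradientAt_iff_hasFDerivAt]
  have hsum : HasFDerivAt (fun z : EuclideanSpace ℝ ι => ∑ i, (d i * z i - b i) ^ 2)
      (∑ i, (2 * (d i * x i - b i) * d i) • EuclideanSpace.proj (𝕜 := ℝ) i) x := by
    refine HasFDerivAt.fun_sum fun i _ => ?_
    have hlin := ((EuclideanSpace.proj (𝕜 := ℝ) (ι := ι) i).hasFDerivAt (x := x)).const_mul (d i)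
    simpa [smul_smul, mul_comm, mul_left_comm] using (hlin.sub_const (b i)).pow 2
  refine (hsum.const_mul (1 / 2)).congr_fderiv ?_
  ext v
  simp only [one_div, smul_apply, _root_.sum_apply, PiLp.proj_apply, smul_eq_mul, mul_sum,
    InnerProductSpace.toDual_apply_apply, PiLp.inner_apply, RCLike.inner_apply, Real.ringHom_apply]
  exact sum_congr rfl fun i _ => by ring

theorem abs_natCast_inv_mul_natCast_mul_sqrt_le_one (κ : ℕ) {t : ℝ} (ht : t ≤ 1) :
    |(κ : ℝ)⁻¹ * (κ * √t)| ≤ 1 := by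
  rw [abs_of_nonneg (by positivity), ← mul_assoc]
  calc (κ : ℝ)⁻¹ * κ * √t ≤ 1 * 1 := by
        gcongr
        · exact inv_mul_le_one_of_le₀ le_rfl κ.cast_nonneg
        · exact Real.sqrt_le_one.mpr ht
    _ = 1 := one_mul 1

theorem iht_fixpoint_lower_bound_general (s κ : ℕ)
    (δ : ℝ) (hδ0 : 0 < δ)
    (d b : Fin (s * (κ ^ 2 + κ + 1)) → ℝ)
    (hd : ∀ i, d i = if (i : ℕ) < s then 1
      else if (i : ℕ) < s * (κ + 1) then Real.sqrt κ else 1)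
    (hb : ∀ i, b i = if (i : ℕ) < s then (κ : ℝ) * Real.sqrt (1 - 4 * δ)
      else if (i : ℕ) < s * (κ + 1) then Real.sqrt κ * Real.sqrt (1 - 2 * δ) else 1)
    (f : EuclideanSpace ℝ (Fin (s * (κ ^ 2 + κ + 1))) → ℝ)
    (hf : ∀ z, f z = (1 / 2) * ∑ i, (d i * z i - b i) ^ 2)
    (S : Finset (Fin (s * (κ ^ 2 + κ + 1))))
    (hS3 : ∀ i ∈ S, s * (κ + 1) ≤ (i : ℕ))
    (x : EuclideanSpace ℝ (Fin (s * (κ ^ 2 + κ + 1))))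
    (hx : ∀ i, x i = if i ∈ S then (1 : ℝ) else 0)
    (y : EuclideanSpace ℝ (Fin (s * (κ ^ 2 + κ + 1))))
    (hy : y = x - (1 / (κ : ℝ)) • gradient f x) :
    (∀ i ∈ S, y i = x i) ∧ (∀ j ∉ S, ∀ i ∈ S, |y j| ≤ |y i|) := by
  have hgrad : gradient f x = WithLp.toLp 2 fun i => d i * (d i * x i - b i) := by
    rw [funext hf]
    exact (hasGradientAt_half_sum_sq d b x).gradient
  have hy_apply : ∀ i, y i = x i - (κ : ℝ)⁻¹ * (d i * (d i * x i - b i)) := by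
    simp [hy, hgrad]
  have hyS : ∀ i ∈ S, y i = 1 := by
    intro i hi
    have hi₁ : ¬ (i : ℕ) < s := by nlinarith [hS3 i hi]
    have hi₂ : ¬ (i : ℕ) < s * (κ + 1) := (hS3 i hi).not_gt
    simp [hy_apply, hx, hd, hb, hi, hi₁, hi₂]
  refine ⟨fun i hi => by rw [hyS i hi, hx, if_pos hi], fun j hj i hi => ?_⟩
  have hyj : y j = (κ : ℝ)⁻¹ * (d j * b j) := by simp [hy_apply, hx, hj]
  rw [hyS i hi, abs_one, hyj, hd, hb]
  split_ifs
  · simpa using abs_natCast_inv_mul_natCast_mul_sqrt_le_one κ (t := 1 - 4 * δ) (by linarith)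
  · rw [← mul_assoc (√(κ : ℝ)), Real.mul_self_sqrt κ.cast_nonneg]
    exact abs_natCast_inv_mul_natCast_mul_sqrt_le_one κ (by linarith)
  · simpa using Nat.cast_inv_le_one κ

/-- The IHT lower-bound instance.  With n = s(κ²+κ+1), diagonal matrix A and
    vector b as in the construction, f(x) = ½‖Ax-b‖₂², S ⊆ I₃ with
    |S| = s' ≤ 0.6sκ², and x the indicator of S, the vector
    y = x - (1/κ)∇f(x) agrees with x on S and every coordinate outside S has
    magnitude at most that of every coordinate in S; hence x = H_{s'}(y),
    i.e. x is a fixpoint of IHT with step size 1/β = 1/κ. -/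
theorem iht_fixpoint_lower_bound (s κ : ℕ) (hκ : 1 ≤ κ) (hs : 1 ≤ s)
    (δ : ℝ) (hδ0 : 0 < δ) (hδ : δ < 1 / 4)
    (d b : Fin (s * (κ ^ 2 + κ + 1)) → ℝ)
    (hd : ∀ i, d i = if (i : ℕ) < s then 1
      else if (i : ℕ) < s * (κ + 1) then Real.sqrt κ else 1)
    (hb : ∀ i, b i = if (i : ℕ) < s then (κ : ℝ) * Real.sqrt (1 - 4 * δ)
      else if (i : ℕ) < s * (κ + 1) then Real.sqrt κ * Real.sqrt (1 - 2 * δ) else 1)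
    (f : EuclideanSpace ℝ (Fin (s * (κ ^ 2 + κ + 1))) → ℝ)
    (hf : ∀ z, f z = (1 / 2) * ∑ i, (d i * z i - b i) ^ 2)
    (S : Finset (Fin (s * (κ ^ 2 + κ + 1))))
    (hS3 : ∀ i ∈ S, s * (κ + 1) ≤ (i : ℕ))
    (hScard : (S.card : ℝ) ≤ 0.6 * s * κ ^ 2)
    (x : EuclideanSpace ℝ (Fin (s * (κ ^ 2 + κ + 1))))
    (hx : ∀ i, x i = if i ∈ S then (1 : ℝ) else 0)
    (y : EuclideanSpace ℝ (Fin (s * (κ ^ 2 + κ + 1))))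
    (hy : y = x - (1 / (κ : ℝ)) • gradient f x) :
    (∀ i ∈ S, y i = x i) ∧ (∀ j ∉ S, ∀ i ∈ S, |y j| ≤ |y i|) :=
  iht_fixpoint_lower_bound_general s κ δ hδ0 d b hd hb f hf S hS3 x hx y hy
end

section
/- Let w, w' ∈ ℝⁿ with w' = (w - c·(wx)²/‖x‖²_{w,2})_{≥1/2}, where x ∈ ℝⁿ with ‖x‖²_{w,2} = Σᵢ wᵢxᵢ² > 0, c > 0, (wx)² is the entrywise square of the entrywise product, and (·)_{≥1/2} zeroes entries below 1/2. Define w̄ᵢ = wᵢ if wᵢ ≥ 1/2 and w̄ᵢ = 1/2 if wᵢ = 0 (assuming w ∈ ({0} ∪ [1/2,1])ⁿ), and similarly w̄'. Then ‖w̄‖₁ - ‖w̄'‖₁ ≤ c. -/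
/-!
Coordinatewise, lifting zeros to `1/2` and then cutting off at `1/2` can lose at most the amount
`c (wᵢxᵢ)² / R` subtracted from `wᵢ` before the cut-off, and these amounts sum to at most `c`
because `wᵢ² ≤ wᵢ` on `[0, 1]`.
-/

namespace WeightDecrease

noncomputable def threshold (a : ℝ) : ℝ := if a < 1 / 2 then 0 else a

noncomputable def bar (a : ℝ) : ℝ := if a = 0 then 1 / 2 else a

lemma bar_sub_bar_threshold_sub_le {a d : ℝ} (ha : a = 0 ∨ 1 / 2 ≤ a) (hd : 0 ≤ d) :
    bar a - bar (threshold (a - d)) ≤ d := by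
  rcases ha with rfl | ha
  · have hcut : threshold (0 - d) = 0 := if_pos (by linarith)
    simp only [bar, hcut, ↓reduceIte]
    linarith
  · have ha0 : a ≠ 0 := by linarith
    by_cases hcut : a - d < 1 / 2
    · simp only [bar, threshold, if_pos hcut, if_neg ha0, ↓reduceIte]
      linarith
    · have hpos : a - d ≠ 0 := by linarith
      simp only [bar, threshold, if_neg hcut, if_neg ha0, if_neg hpos]
      linarith

lemma sum_mul_sq_le_sum_mul_sq {ι : Type*} (s : Finset ι) (w x : ι → ℝ)
    (hw : ∀ i ∈ s, 0 ≤ w i ∧ w i ≤ 1) :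
    ∑ i ∈ s, (w i * x i) ^ 2 ≤ ∑ i ∈ s, w i * x i ^ 2 := by
  refine Finset.sum_le_sum fun i hi => ?_
  obtain ⟨h0, h1⟩ := hw i hi
  rw [mul_pow]
  exact mul_le_mul_of_nonneg_right (pow_le_of_le_one h0 h1 two_ne_zero) (sq_nonneg _)

end WeightDecrease

open WeightDecrease in
/-- Weight-decrease bound.  Let w ∈ ({0} ∪ [1/2,1])ⁿ, x with
    R = Σᵢ wᵢxᵢ² > 0, c > 0, and let
    w'ᵢ = (wᵢ - c(wᵢxᵢ)²/R)_{≥1/2} (entries below 1/2 are zeroed out).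
    With w̄ᵢ = wᵢ if wᵢ ≥ 1/2 and w̄ᵢ = 1/2 if wᵢ = 0 (similarly w̄'),
    we have ‖w̄‖₁ - ‖w̄'‖₁ ≤ c. -/
theorem weight_decrease_le (n : ℕ) (w x : Fin n → ℝ) (c : ℝ) (hc : 0 < c)
    (hw : ∀ i, w i = 0 ∨ (1 / 2 ≤ w i ∧ w i ≤ 1))
    (R : ℝ) (hR : R = ∑ i, w i * x i ^ 2) (hRpos : 0 < R)
    (w' : Fin n → ℝ)
    (hw' : ∀ i, w' i =
      if w i - c * (w i * x i) ^ 2 / R < 1 / 2 then 0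
      else w i - c * (w i * x i) ^ 2 / R)
    (wbar wbar' : Fin n → ℝ)
    (hwbar : ∀ i, wbar i = if w i = 0 then 1 / 2 else w i)
    (hwbar' : ∀ i, wbar' i = if w' i = 0 then 1 / 2 else w' i) :
    (∑ i, wbar i) - (∑ i, wbar' i) ≤ c := by
  have hcoord : ∀ i, wbar i - wbar' i ≤ c * (w i * x i) ^ 2 / R := by
    intro i
    have hbar : wbar i - wbar' i =
        bar (w i) - bar (threshold (w i - c * (w i * x i) ^ 2 / R)) := by
      rw [hwbar, hwbar', hw']
      rfl
    rw [hbar]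
    exact bar_sub_bar_threshold_sub_le ((hw i).imp_right And.left) (by positivity)
  have hsq : ∑ i, (w i * x i) ^ 2 ≤ R := hR ▸ sum_mul_sq_le_sum_mul_sq _ w x fun i _ =>
    (hw i).elim (fun h => ⟨h.ge, by linarith⟩) fun h => ⟨by linarith [h.1], h.2⟩
  calc (∑ i, wbar i) - (∑ i, wbar' i)
      = ∑ i, (wbar i - wbar' i) := (Finset.sum_sub_distrib _ _).symm
    _ ≤ ∑ i, c * (w i * x i) ^ 2 / R := Finset.sum_le_sum fun i _ => hcoord i
    _ = c * (∑ i, (w i * x i) ^ 2) / R := by rw [Finset.mul_sum, Finset.sum_div]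
    _ ≤ c * R / R := by gcongr
    _ = c := mul_div_cancel_right₀ c hRpos.ne'
end

section
/- Let f: ℝⁿ → ℝ be β-smooth, let g(x) = f(x) + (β/2)‖x‖²_{w,2} with w ∈ [0,1]ⁿ, let x have support S with |S| = s', and let x̄ = x - (2β)⁻¹∇g(x), x' = H_{s'}(x̄) with support S', A = S'\S, B = S\S'. Then g(x') - g(x) ≤ -(4β)⁻¹‖∇_{S'∪B} g(x)‖₂² + β‖x̄_B‖₂². -/
/-!
Because `w ≤ 1`, the regulariser `y ↦ (β/2) ∑ wᵢ yᵢ²` lies below its tangent plus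
`(β/2)‖y - x‖²`, so `g` is `2β`-smooth: `g x' - g x ≤ ⟪∇g x, x' - x⟫ + β‖x' - x‖²`.
The right-hand side splits over coordinates and can be evaluated exactly. On `S'` the step
is `x' - x = -(2β)⁻¹ ∇g x`, contributing `-(4β)⁻¹ (∇ᵢ g)²`; on `B = S \ S'` it is
`-x = -(x̄ + (2β)⁻¹ ∇g x)`, contributing `β x̄ᵢ² - (4β)⁻¹ (∇ᵢ g)²`; elsewhere `x = x' = 0`.
-/

open InnerProductSpace
variable {ι : Type*} [Fintype ι]

theorem hasGradientAt_sum_mul_sq (w : ι → ℝ) (x : EuclideanSpace ℝ ι) :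
    HasGradientAt (fun y : EuclideanSpace ℝ ι => ∑ i, w i * y i ^ 2)
      (WithLp.toLp 2 fun i => 2 * w i * x i) x := by
  rw [hasGradientAt_iff_hasFDerivAt]
  have hterm (i : ι) : HasFDerivAt (fun y : EuclideanSpace ℝ ι => w i * y i ^ 2)
      ((2 * w i * x i) • EuclideanSpace.proj (𝕜 := ℝ) i) x := by
    refine (((EuclideanSpace.proj (𝕜 := ℝ) i).hasFDerivAt (x := x)).pow 2
      |>.const_mul (w i)).congr_fderiv ?_
    ext y
    simp only [smul_apply, PiLp.proj_apply, nsmul_eq_mul, Nat.cast_ofNat,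
      Nat.add_one_sub_one, pow_one, smul_eq_mul]
    ring
  refine (HasFDerivAt.fun_sum fun i _ => hterm i).congr_fderiv ?_
  ext y
  simp [PiLp.inner_apply, mul_comm]

theorem sum_mul_sq_le_add_inner_add_norm_sq {w : ι → ℝ} (hw : ∀ i, w i ≤ 1)
    (x y : EuclideanSpace ℝ ι) :
    ∑ i, w i * y i ^ 2 ≤
      ∑ i, w i * x i ^ 2 + ⟪WithLp.toLp 2 fun i => 2 * w i * x i, y - x⟫_ℝ
        + ‖y - x‖ ^ 2 := by
  simp only [PiLp.inner_apply, EuclideanSpace.real_norm_sq_eq, PiLp.sub_apply,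
    RCLike.inner_apply, conj_trivial, ← Finset.sum_add_distrib]
  refine Finset.sum_le_sum fun i _ => ?_
  -- the two sides differ by `(1 - w i) * (y i - x i) ^ 2`
  nlinarith [mul_nonneg (sub_nonneg.2 (hw i)) (sq_nonneg (y i - x i))]

section Regularized

variable {f g : EuclideanSpace ℝ ι → ℝ} {β : ℝ} {w : ι → ℝ}

theorem hasGradientAt_add_half_mul_sum_mul_sq {x : EuclideanSpace ℝ ι}
    (hf : DifferentiableAt ℝ f x) (hg : ∀ y, g y = f y + (β / 2) * ∑ i, w i * y i ^ 2) :
    HasGradientAt g (gradient f x + (β / 2) • WithLp.toLp 2 fun i => 2 * w i * x i) x := by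
  rw [show g = fun y => f y + (β / 2) * ∑ i, w i * y i ^ 2 from funext hg,
    hasGradientAt_iff_hasFDerivAt, map_add, map_smul]
  exact hf.hasGradientAt.hasFDerivAt.add
    ((hasGradientAt_sum_mul_sq w x).hasFDerivAt.const_mul (β / 2))

theorem smooth_add_half_mul_sum_mul_sq
    {x : EuclideanSpace ℝ ι} (hf : DifferentiableAt ℝ f x) (hβ : 0 ≤ β)
    (hsmooth : ∀ y, f y ≤ f x + ⟪gradient f x, y - x⟫_ℝ + (β / 2) * ‖y - x‖ ^ 2)
    (hw : ∀ i, w i ≤ 1) (hg : ∀ y, g y = f y + (β / 2) * ∑ i, w i * y i ^ 2)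
    (y : EuclideanSpace ℝ ι) :
    g y ≤ g x + ⟪gradient g x, y - x⟫_ℝ + β * ‖y - x‖ ^ 2 := by
  rw [(hasGradientAt_add_half_mul_sum_mul_sq hf hg).gradient, inner_add_left,
    real_inner_smul_left, hg, hg]
  have hq := mul_le_mul_of_nonneg_left (sum_mul_sq_le_add_inner_add_norm_sq hw x y)
    (by positivity : (0 : ℝ) ≤ β / 2)
  linarith [hsmooth y]

end Regularized

theorem inner_add_mul_norm_sq_sub_of_hardThreshold [DecidableEq ι] {β : ℝ} (hβ : β ≠ 0)
    {G x xbar x' : EuclideanSpace ℝ ι} {S S' : Finset ι} (hS : ∀ i, x i ≠ 0 → i ∈ S)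
    (hxbar : xbar = x - (2 * β)⁻¹ • G) (hx' : ∀ i, x' i = if i ∈ S' then xbar i else 0) :
    ⟪G, x' - x⟫_ℝ + β * ‖x' - x‖ ^ 2 =
      -(4 * β)⁻¹ * ∑ i ∈ S' ∪ S \ S', G i ^ 2 + β * ∑ i ∈ S \ S', xbar i ^ 2 := by
  set φ : ι → ℝ := fun i => G i * (x' i - x i) + β * (x' i - x i) ^ 2
  have hxbar_apply (i : ι) : xbar i = x i - (2 * β)⁻¹ * G i := by simp [hxbar]
  have hlhs : ⟪G, x' - x⟫_ℝ + β * ‖x' - x‖ ^ 2 = ∑ i, φ i := by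
    simp only [φ, PiLp.inner_apply, EuclideanSpace.real_norm_sq_eq, PiLp.sub_apply,
      RCLike.inner_apply, conj_trivial, Finset.mul_sum, ← Finset.sum_add_distrib, mul_comm]
  have hsupport : ∑ i ∈ S' ∪ S \ S', φ i = ∑ i, φ i := by
    refine Finset.sum_subset (Finset.subset_univ _) fun i _ hi => ?_
    rw [Finset.union_sdiff_self_eq_union, Finset.mem_union, not_or] at hi
    have hxi : x i = 0 := by_contra fun h => hi.2 (hS i h)
    simp [φ, hx', hi.1, hxi]
  have hkept : ∀ i ∈ S', φ i = -(4 * β)⁻¹ * G i ^ 2 := fun i hi => by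
    simp only [φ, hx', if_pos hi, hxbar_apply]
    field_simp
    ring
  have hdropped :
      ∀ i ∈ S \ S', φ i = -(4 * β)⁻¹ * G i ^ 2 + β * xbar i ^ 2 := fun i hi => by
    simp only [φ, hx', if_neg (Finset.mem_sdiff.1 hi).2, hxbar_apply]
    field_simp
    ring
  rw [hlhs, ← hsupport, Finset.sum_union Finset.disjoint_sdiff, Finset.sum_congr rfl hkept,
    Finset.sum_congr rfl hdropped, Finset.sum_union Finset.disjoint_sdiff,
    Finset.sum_add_distrib, ← Finset.mul_sum, ← Finset.mul_sum, ← Finset.mul_sum]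
  ring

theorem regularized_iht_descent_general (n : ℕ)
    (f : EuclideanSpace ℝ (Fin n) → ℝ) (hf : Differentiable ℝ f)
    (β : ℝ) (hβ : 0 < β)
    (hsmooth : ∀ x y : EuclideanSpace ℝ (Fin n),
      f y ≤ f x + (inner ℝ (gradient f x) (y - x) : ℝ) + (β / 2) * ‖y - x‖ ^ 2)
    (w : Fin n → ℝ) (hw : ∀ i, 0 ≤ w i ∧ w i ≤ 1)
    (g : EuclideanSpace ℝ (Fin n) → ℝ)
    (hg : ∀ x : EuclideanSpace ℝ (Fin n), g x = f x + (β / 2) * ∑ i, w i * x i ^ 2)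
    (x : EuclideanSpace ℝ (Fin n)) (S S' : Finset (Fin n))
    (hS : ∀ i, x i ≠ 0 ↔ i ∈ S)
    (xbar : EuclideanSpace ℝ (Fin n))
    (hxbar : xbar = x - (2 * β)⁻¹ • gradient g x)
    (x' : EuclideanSpace ℝ (Fin n))
    (hx' : ∀ i, x' i = if i ∈ S' then xbar i else 0)
    (B : Finset (Fin n)) (hB : B = S \ S') :
    g x' - g x ≤
      -(4 * β)⁻¹ * (∑ i ∈ S' ∪ B, (gradient g x i) ^ 2) + β * ∑ i ∈ B, xbar i ^ 2 := by
  subst hB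
  have hdescent :=
    smooth_add_half_mul_sum_mul_sq (hf x) hβ.le (hsmooth x) (fun i => (hw i).2) hg x'
  have hstep :=
    inner_add_mul_norm_sq_sub_of_hardThreshold hβ.ne' (fun i => (hS i).1) hxbar hx'
  linarith

/-- Regularized IHT descent inequality.  Let f be β-smooth and differentiable,
    w ∈ [0,1]ⁿ, g(x) = f(x) + (β/2)Σᵢ wᵢxᵢ², let x have support S with
    |S| = s', x̄ = x - (2β)⁻¹∇g(x), and x' = H_{s'}(x̄) with support S'
    (a set of s' indices of largest magnitude of x̄), A = S'\S, B = S\S'.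
    Then g(x') - g(x) ≤ -(4β)⁻¹‖∇_{S'∪B} g(x)‖₂² + β‖x̄_B‖₂². -/
theorem regularized_iht_descent (n : ℕ)
    (f : EuclideanSpace ℝ (Fin n) → ℝ) (hf : Differentiable ℝ f)
    (β : ℝ) (hβ : 0 < β)
    (hsmooth : ∀ x y : EuclideanSpace ℝ (Fin n),
      f y ≤ f x + (inner ℝ (gradient f x) (y - x) : ℝ) + (β / 2) * ‖y - x‖ ^ 2)
    (w : Fin n → ℝ) (hw : ∀ i, 0 ≤ w i ∧ w i ≤ 1)
    (g : EuclideanSpace ℝ (Fin n) → ℝ)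
    (hg : ∀ x : EuclideanSpace ℝ (Fin n), g x = f x + (β / 2) * ∑ i, w i * x i ^ 2)
    (x : EuclideanSpace ℝ (Fin n)) (s' : ℕ) (S S' : Finset (Fin n))
    (hS : ∀ i, x i ≠ 0 ↔ i ∈ S) (hcS : S.card = s') (hcS' : S'.card = s')
    (xbar : EuclideanSpace ℝ (Fin n))
    (hxbar : xbar = x - (2 * β)⁻¹ • gradient g x)
    (htop : ∀ i ∈ S', ∀ j ∉ S', |xbar j| ≤ |xbar i|)
    (x' : EuclideanSpace ℝ (Fin n))
    (hx' : ∀ i, x' i = if i ∈ S' then xbar i else 0)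
    (B : Finset (Fin n)) (hB : B = S \ S') :
    g x' - g x ≤
      -(4 * β)⁻¹ * (∑ i ∈ S' ∪ B, (gradient g x i) ^ 2) + β * ∑ i ∈ B, xbar i ^ 2 :=
  regularized_iht_descent_general n f hf β hβ hsmooth w hw g hg x S S' hS xbar hxbar x' hx' B hB
end

section
/- Let g: ℝ^{m×n} → ℝ be differentiable with ‖∇g(A') - ∇g(A)‖_F ≤ 2β‖A'-A‖_F for all A, A'. Let A = UΛVᵀ (SVD, rank r'), suppose Π_{im(U)} ∇g(A) Π_{im(V)} = O, let η = (2β)⁻¹, let j minimize the singular value λⱼ, and set A' = A - η·H₁(∇g(A)) - λⱼ uⱼ vⱼᵀ. Then g(A') - g(A) ≤ -(8β)⁻¹‖∇g(A)‖₂² + 2βλⱼ², where ‖·‖₂ denotes the spectral norm and H₁ returns the top singular component. -/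
/-!
The 2β-Lipschitz gradient gives the descent inequality
`g (A + D) ≤ g A + ⟨∇g(A), D⟩ + β ‖D‖_F²`. For `D = -η σ pqᵀ - λⱼ uⱼvⱼᵀ` the linear term is
`-η σ²`, since `∇g(A)` is orthogonal to `uⱼvⱼᵀ`; the only obstruction is the cross term
`⟨pqᵀ, uⱼvⱼᵀ⟩ = ⟨p, uⱼ⟩⟨q, vⱼ⟩` in `‖D‖_F²`. As `(p, q)` is a top singular pair, `∇g(A) q = σ p`,
so with `t = ⟨q, vⱼ⟩` we get `σ ⟨p, uⱼ⟩ = uⱼᵀ ∇g(A) (q - t vⱼ)`, of absolute value at most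
`σ √(1 - t²)`. Hence `|σ ⟨pqᵀ, uⱼvⱼᵀ⟩| ≤ σ √(1 - t²) |t| ≤ σ / 2`, and AM–GM finishes.
-/

open Matrix

noncomputable def frobInner {m n : ℕ} (A B : Matrix (Fin m) (Fin n) ℝ) : ℝ :=
  ∑ i, ∑ j, A i j * B i j

noncomputable def frobNorm {m n : ℕ} (M : Matrix (Fin m) (Fin n) ℝ) : ℝ :=
  Real.sqrt (frobInner M M)

section Frobenius

variable {m n : ℕ}

def frobFlat : Matrix (Fin m) (Fin n) ℝ →ₗ[ℝ] EuclideanSpace ℝ (Fin m × Fin n) :=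
  (WithLp.linearEquiv 2 ℝ _).symm.toLinearMap ∘ₗ
    (LinearEquiv.curry ℝ ℝ (Fin m) (Fin n)).symm.toLinearMap

@[simp]
theorem frobFlat_apply (A : Matrix (Fin m) (Fin n) ℝ) (i : Fin m) (j : Fin n) :
    frobFlat A (i, j) = A i j := rfl

theorem frobInner_eq_inner (A B : Matrix (Fin m) (Fin n) ℝ) :
    frobInner A B = inner ℝ (frobFlat A) (frobFlat B) := by
  simp [frobInner, PiLp.inner_apply, Fintype.sum_prod_type, mul_comm]

theorem frobNorm_eq_norm (A : Matrix (Fin m) (Fin n) ℝ) : frobNorm A = ‖frobFlat A‖ := by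
  rw [frobNorm, frobInner_eq_inner, real_inner_self_eq_norm_sq, Real.sqrt_sq (norm_nonneg _)]

theorem frobNorm_nonneg (X : Matrix (Fin m) (Fin n) ℝ) : 0 ≤ frobNorm X :=
  Real.sqrt_nonneg _

theorem frobInner_self (X : Matrix (Fin m) (Fin n) ℝ) : frobInner X X = frobNorm X ^ 2 := by
  rw [frobInner_eq_inner, frobNorm_eq_norm, real_inner_self_eq_norm_sq]

theorem frobInner_le_frobNorm_mul (X Y : Matrix (Fin m) (Fin n) ℝ) :
    frobInner X Y ≤ frobNorm X * frobNorm Y := by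
  rw [frobInner_eq_inner, frobNorm_eq_norm, frobNorm_eq_norm]
  exact real_inner_le_norm _ _

theorem frobNorm_smul (c : ℝ) (X : Matrix (Fin m) (Fin n) ℝ) :
    frobNorm (c • X) = |c| * frobNorm X := by
  rw [frobNorm_eq_norm, frobNorm_eq_norm, map_smul, norm_smul, Real.norm_eq_abs]

theorem frobInner_sub_left (X Y Z : Matrix (Fin m) (Fin n) ℝ) :
    frobInner (X - Y) Z = frobInner X Z - frobInner Y Z := by
  simp only [frobInner_eq_inner, map_sub, inner_sub_left]

theorem frobInner_smul_add_smul_right (Z X Y : Matrix (Fin m) (Fin n) ℝ) (a b : ℝ) :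
    frobInner Z (a • X + b • Y) = a * frobInner Z X + b * frobInner Z Y := by
  simp only [frobInner_eq_inner, map_add, map_smul, inner_add_right, real_inner_smul_right]

theorem frobInner_smul_add_smul_self (X Y : Matrix (Fin m) (Fin n) ℝ) (a b : ℝ) :
    frobInner (a • X + b • Y) (a • X + b • Y)
      = a ^ 2 * frobInner X X + 2 * a * b * frobInner X Y + b ^ 2 * frobInner Y Y := by
  simp only [frobInner_eq_inner, map_add, map_smul, inner_add_right, inner_add_left,
    real_inner_smul_right, real_inner_smul_left, real_inner_comm (frobFlat X)]
  ring

theorem frobInner_vecMulVec (X : Matrix (Fin m) (Fin n) ℝ) (a : Fin m → ℝ) (b : Fin n → ℝ) :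
    frobInner X (vecMulVec a b) = a ⬝ᵥ X *ᵥ b := by
  simp only [frobInner, vecMulVec_apply, dotProduct, mulVec, Finset.mul_sum]
  exact Finset.sum_congr rfl fun i _ => Finset.sum_congr rfl fun k _ => by ring

theorem frobInner_vecMulVec_vecMulVec (a c : Fin m → ℝ) (b d : Fin n → ℝ) :
    frobInner (vecMulVec a b) (vecMulVec c d) = (a ⬝ᵥ c) * (b ⬝ᵥ d) := by
  rw [frobInner_vecMulVec, vecMulVec_mulVec, op_smul_eq_smul, dotProduct_smul, smul_eq_mul,
    mul_comm, dotProduct_comm]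

end Frobenius

theorem le_add_deriv_add_half_of_deriv_le {φ φ' : ℝ → ℝ} {L : ℝ}
    (hφ : ∀ t, HasDerivAt φ (φ' t) t) (hφ' : ∀ t ∈ Set.Ico (0 : ℝ) 1, φ' t ≤ φ' 0 + L * t) :
    φ 1 ≤ φ 0 + φ' 0 + L / 2 := by
  have hB : ∀ t, HasDerivAt (fun t => φ 0 + t * φ' 0 + L / 2 * t ^ 2) (φ' 0 + L * t) t := by
    intro t
    refine ((((hasDerivAt_id' t).mul_const (φ' 0)).const_add (φ 0)).add
      ((hasDerivAt_pow 2 t).const_mul (L / 2))).congr_deriv ?_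
    ring
  have h := image_le_of_deriv_right_le_deriv_boundary
    (fun t _ => (hφ t).continuousAt.continuousWithinAt) (fun t _ => (hφ t).hasDerivWithinAt)
    (by simp) (fun t _ => (hB t).continuousAt.continuousWithinAt)
    (fun t _ => (hB t).hasDerivWithinAt) hφ' (Set.right_mem_Icc.2 zero_le_one)
  simpa using h

theorem le_add_frobInner_add_of_lipschitz_gradient {m n : ℕ} {L : ℝ}
    (g : Matrix (Fin m) (Fin n) ℝ → ℝ)
    (G : Matrix (Fin m) (Fin n) ℝ → Matrix (Fin m) (Fin n) ℝ)
    (hgrad : ∀ (A B : Matrix (Fin m) (Fin n) ℝ) (t : ℝ),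
      HasDerivAt (fun s : ℝ => g (A + s • B)) (frobInner (G (A + t • B)) B) t)
    (hLip : ∀ A A' : Matrix (Fin m) (Fin n) ℝ,
      frobNorm (G A' - G A) ≤ L * frobNorm (A' - A))
    (A D : Matrix (Fin m) (Fin n) ℝ) :
    g (A + D) ≤ g A + frobInner (G A) D + L / 2 * frobInner D D := by
  have hslope : ∀ t ∈ Set.Ico (0 : ℝ) 1, frobInner (G (A + t • D)) D
      ≤ frobInner (G (A + (0 : ℝ) • D)) D + L * frobInner D D * t := by
    intro t ht
    calc frobInner (G (A + t • D)) D
        = frobInner (G A) D + frobInner (G (A + t • D) - G A) D := by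
          rw [frobInner_sub_left]; ring
      _ ≤ frobInner (G A) D + frobNorm (G (A + t • D) - G A) * frobNorm D := by
          grw [frobInner_le_frobNorm_mul (G (A + t • D) - G A)]
      _ ≤ frobInner (G A) D + L * frobNorm (t • D) * frobNorm D := by
          grw [hLip A (A + t • D), add_sub_cancel_left]
          exact frobNorm_nonneg D
      _ = frobInner (G (A + (0 : ℝ) • D)) D + L * frobInner D D * t := by
          rw [frobNorm_smul, abs_of_nonneg ht.1, frobInner_self, zero_smul, add_zero]; ring
  have h := le_add_deriv_add_half_of_deriv_le (hgrad A D) hslope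
  simp only [zero_smul, add_zero, one_smul] at h
  linarith

section TopSingularPair

variable {m n : Type*} [Fintype m] [Fintype n]

theorem dotProduct_self_nonneg_real (v : m → ℝ) : 0 ≤ v ⬝ᵥ v :=
  Finset.sum_nonneg fun i _ => mul_self_nonneg (v i)

theorem dotProduct_self_inv_sqrt_smul {v : m → ℝ} (hv : v ≠ 0) :
    ((√(v ⬝ᵥ v))⁻¹ • v) ⬝ᵥ ((√(v ⬝ᵥ v))⁻¹ • v) = 1 := by
  have hpos : 0 < v ⬝ᵥ v := (dotProduct_self_nonneg_real v).lt_of_ne' (by simpa using hv)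
  rw [smul_dotProduct, dotProduct_smul, smul_eq_mul, smul_eq_mul, ← mul_assoc, ← mul_inv,
    Real.mul_self_sqrt hpos.le, inv_mul_cancel₀ hpos.ne']

variable {M : Matrix m n ℝ} {σ : ℝ}

theorem dotProduct_mulVec_le_of_unit_le
    (hM : ∀ x y, x ⬝ᵥ x = 1 → y ⬝ᵥ y = 1 → x ⬝ᵥ M *ᵥ y ≤ σ) (x : m → ℝ) (y : n → ℝ) :
    x ⬝ᵥ M *ᵥ y ≤ σ * (√(x ⬝ᵥ x) * √(y ⬝ᵥ y)) := by
  rcases eq_or_ne x 0 with rfl | hx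
  · simp
  rcases eq_or_ne y 0 with rfl | hy
  · simp
  have hxy : 0 < √(x ⬝ᵥ x) * √(y ⬝ᵥ y) := by
    apply mul_pos <;> apply Real.sqrt_pos.2 <;>
      exact (dotProduct_self_nonneg_real _).lt_of_ne' (by simpa)
  have h := hM _ _ (dotProduct_self_inv_sqrt_smul hx) (dotProduct_self_inv_sqrt_smul hy)
  rw [mulVec_smul, dotProduct_smul, smul_dotProduct, smul_eq_mul, smul_eq_mul, ← mul_assoc,
    ← mul_inv, mul_comm (√(y ⬝ᵥ y)), inv_mul_le_iff₀ hxy] at h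
  linarith

theorem abs_dotProduct_mulVec_le_of_unit_le
    (hM : ∀ x y, x ⬝ᵥ x = 1 → y ⬝ᵥ y = 1 → x ⬝ᵥ M *ᵥ y ≤ σ) (x : m → ℝ) (y : n → ℝ) :
    |x ⬝ᵥ M *ᵥ y| ≤ σ * (√(x ⬝ᵥ x) * √(y ⬝ᵥ y)) := by
  refine abs_le.2 ⟨?_, dotProduct_mulVec_le_of_unit_le hM x y⟩
  have h := dotProduct_mulVec_le_of_unit_le hM (-x) y
  rw [neg_dotProduct, neg_dotProduct, dotProduct_neg, neg_neg] at h
  linarith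

structure IsTopSingularPair (M : Matrix m n ℝ) (σ : ℝ) (p : m → ℝ) (q : n → ℝ) : Prop where
  unit_left : p ⬝ᵥ p = 1
  unit_right : q ⬝ᵥ q = 1
  dotProduct_mulVec : p ⬝ᵥ M *ᵥ q = σ
  le : ∀ x y, x ⬝ᵥ x = 1 → y ⬝ᵥ y = 1 → x ⬝ᵥ M *ᵥ y ≤ σ

namespace IsTopSingularPair

variable {p : m → ℝ} {q : n → ℝ}

theorem nonneg (h : IsTopSingularPair M σ p q) : 0 ≤ σ := by
  simpa [h.unit_left, h.unit_right] using
    (abs_nonneg _).trans (abs_dotProduct_mulVec_le_of_unit_le h.le p q)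

theorem mulVec_eq_smul (h : IsTopSingularPair M σ p q) : M *ᵥ q = σ • p := by
  set w := M *ᵥ q
  have hpw : p ⬝ᵥ w = σ := h.dotProduct_mulVec
  have hww : w ⬝ᵥ w ≤ σ ^ 2 := by
    have hw := dotProduct_mulVec_le_of_unit_le h.le w q
    rw [h.unit_right, Real.sqrt_one, mul_one] at hw
    have hs := Real.mul_self_sqrt (dotProduct_self_nonneg_real w)
    nlinarith [Real.sqrt_nonneg (w ⬝ᵥ w), sq_nonneg (σ - √(w ⬝ᵥ w))]
  have hdist : (w - σ • p) ⬝ᵥ (w - σ • p) = w ⬝ᵥ w - σ ^ 2 := by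
    simp only [sub_dotProduct, dotProduct_sub, smul_dotProduct, dotProduct_smul, smul_eq_mul,
      h.unit_left, dotProduct_comm w p, hpw]
    ring
  rw [← sub_eq_zero, ← dotProduct_self_eq_zero]
  exact le_antisymm (by linarith) (dotProduct_self_nonneg_real _)

theorem abs_mul_dotProduct_mul_dotProduct_le (h : IsTopSingularPair M σ p q) {u : m → ℝ}
    {v : n → ℝ} (hu : u ⬝ᵥ u = 1) (hv : v ⬝ᵥ v = 1) (huv : u ⬝ᵥ M *ᵥ v = 0) :
    |σ * ((p ⬝ᵥ u) * (q ⬝ᵥ v))| ≤ σ / 2 := by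
  set t := q ⬝ᵥ v
  have hw : (q - t • v) ⬝ᵥ (q - t • v) = 1 - t ^ 2 := by
    simp only [sub_dotProduct, dotProduct_sub, smul_dotProduct, dotProduct_smul, smul_eq_mul,
      h.unit_right, hv, dotProduct_comm v q]
    ring
  have ht : 0 ≤ 1 - t ^ 2 := hw ▸ dotProduct_self_nonneg_real _
  have he : u ⬝ᵥ M *ᵥ (q - t • v) = σ * (p ⬝ᵥ u) := by
    rw [mulVec_sub, mulVec_smul, dotProduct_sub, dotProduct_smul, huv, h.mulVec_eq_smul,
      dotProduct_smul, dotProduct_comm, smul_eq_mul, smul_zero, sub_zero]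
  have hbound := abs_dotProduct_mulVec_le_of_unit_le h.le u (q - t • v)
  rw [he, hu, hw, Real.sqrt_one, one_mul] at hbound
  have hamgm : √(1 - t ^ 2) * |t| ≤ 1 / 2 := by
    nlinarith [sq_nonneg (√(1 - t ^ 2) - |t|), Real.sq_sqrt ht, sq_abs t]
  calc |σ * ((p ⬝ᵥ u) * t)| = |σ * (p ⬝ᵥ u)| * |t| := by rw [← mul_assoc, abs_mul]
    _ ≤ σ * √(1 - t ^ 2) * |t| := by gcongr
    _ ≤ σ / 2 := by nlinarith [mul_le_mul_of_nonneg_left hamgm h.nonneg]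

end IsTopSingularPair

end TopSingularPair

theorem quadratic_step_bound {β η σ l c : ℝ} (hη : 2 * β * η = 1) (hη0 : 0 ≤ η) (hβ : 0 ≤ β)
    (hc : |σ * c| ≤ σ / 2) :
    -(η * σ ^ 2) + β * (η ^ 2 * σ ^ 2 + 2 * η * σ * l * c + l ^ 2)
      ≤ -(η / 4) * σ ^ 2 + 2 * β * l ^ 2 := by
  have hl : l * (σ * c) ≤ |l| * (σ / 2) := (le_abs_self _).trans (by rw [abs_mul]; gcongr)
  have hsq : 0 ≤ η * (σ / 2 - β * |l|) ^ 2 := by positivity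
  have hβl : 0 ≤ β * l ^ 2 := by positivity
  -- once `2βη = 1`, the gap is `η (σ/2 - β|l|)² + βl²/2 + (|l| σ/2 - l σ c)`
  linear_combination hl + hsq + hβl / 2
    - (-(η * σ ^ 2) / 2 - l * σ * c + σ * |l| / 2 - β * l ^ 2 / 2) * hη
    + η * β ^ 2 * sq_abs l

theorem low_rank_step_progress_general (m n r' : ℕ) (β : ℝ) (hβ : 0 < β)
    (g : Matrix (Fin m) (Fin n) ℝ → ℝ)
    (G : Matrix (Fin m) (Fin n) ℝ → Matrix (Fin m) (Fin n) ℝ)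
    (hgrad : ∀ (A B : Matrix (Fin m) (Fin n) ℝ) (t : ℝ),
      HasDerivAt (fun s : ℝ => g (A + s • B)) (frobInner (G (A + t • B)) B) t)
    (hLip : ∀ A A' : Matrix (Fin m) (Fin n) ℝ,
      frobNorm (G A' - G A) ≤ 2 * β * frobNorm (A' - A))
    (A : Matrix (Fin m) (Fin n) ℝ)
    (lam : Fin r' → ℝ) (u : Fin r' → Fin m → ℝ) (v : Fin r' → Fin n → ℝ)
    (hu : ∀ j k, u j ⬝ᵥ u k = if j = k then (1 : ℝ) else 0)
    (hv : ∀ j k, v j ⬝ᵥ v k = if j = k then (1 : ℝ) else 0)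
    (hproj : ∀ j k, u j ⬝ᵥ (G A).mulVec (v k) = 0)
    (σ : ℝ) (p : Fin m → ℝ) (q : Fin n → ℝ)
    (hp : p ⬝ᵥ p = 1) (hq : q ⬝ᵥ q = 1)
    (hσ : frobInner (G A) (Matrix.vecMulVec p q) = σ)
    (hσtop : ∀ (p' : Fin m → ℝ) (q' : Fin n → ℝ), p' ⬝ᵥ p' = 1 → q' ⬝ᵥ q' = 1 →
      frobInner (G A) (Matrix.vecMulVec p' q') ≤ σ)
    (j : Fin r')
    (A' : Matrix (Fin m) (Fin n) ℝ)
    (hA' : A' = A - (2 * β)⁻¹ • (σ • Matrix.vecMulVec p q)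
        - lam j • Matrix.vecMulVec (u j) (v j)) :
    g A' - g A ≤ -(8 * β)⁻¹ * σ ^ 2 + 2 * β * lam j ^ 2 := by
  set P := vecMulVec p q
  set Q := vecMulVec (u j) (v j)
  have htop : IsTopSingularPair (G A) σ p q :=
    ⟨hp, hq, (frobInner_vecMulVec _ _ _).symm.trans hσ,
      fun x y hx hy => by simpa only [frobInner_vecMulVec] using hσtop x y hx hy⟩
  have huj : u j ⬝ᵥ u j = 1 := by simpa using hu j j
  have hvj : v j ⬝ᵥ v j = 1 := by simpa using hv j j
  have hcross : |σ * frobInner P Q| ≤ σ / 2 := by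
    rw [frobInner_vecMulVec_vecMulVec]
    exact htop.abs_mul_dotProduct_mul_dotProduct_le huj hvj (hproj j j)
  have hGQ : frobInner (G A) Q = 0 := (frobInner_vecMulVec _ _ _).trans (hproj j j)
  have hPP : frobInner P P = 1 := by rw [frobInner_vecMulVec_vecMulVec, hp, hq, one_mul]
  have hQQ : frobInner Q Q = 1 := by rw [frobInner_vecMulVec_vecMulVec, huj, hvj, one_mul]
  have hstep : A' = A + (-((2 * β)⁻¹ * σ) • P + (-lam j) • Q) := by
    rw [hA']; module
  have hdescent := le_add_frobInner_add_of_lipschitz_gradient g G hgrad hLip A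
    (-((2 * β)⁻¹ * σ) • P + (-lam j) • Q)
  rw [← hstep, frobInner_smul_add_smul_right, frobInner_smul_add_smul_self, hσ, hGQ, hPP,
    hQQ] at hdescent
  have hη : 2 * β * (2 * β)⁻¹ = 1 := mul_inv_cancel₀ (by positivity)
  have h8 : (8 * β)⁻¹ = (2 * β)⁻¹ / 4 := by rw [show 8 * β = 4 * (2 * β) by ring, mul_inv]; ring
  linear_combination hdescent + quadratic_step_bound (l := lam j) hη (by positivity) hβ.le hcross
    - σ ^ 2 * h8

/-- Low-rank step progress.  Let g be differentiable with gradient G that is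
    2β-Lipschitz in Frobenius norm, A = Σⱼ λⱼ uⱼvⱼᵀ an SVD of a rank-r' matrix
    with Π_{im(U)} G(A) Π_{im(V)} = O.  Let σ = ‖G(A)‖₂ be the spectral norm,
    attained by unit vectors p, q (so σ·pqᵀ = H₁(G(A)) is the top singular
    component), let j minimize λ, and
    A' = A - (2β)⁻¹·H₁(G(A)) - λⱼuⱼvⱼᵀ.  Then
    g(A') - g(A) ≤ -(8β)⁻¹σ² + 2βλⱼ². -/
theorem low_rank_step_progress (m n r' : ℕ) (β : ℝ) (hβ : 0 < β)
    (g : Matrix (Fin m) (Fin n) ℝ → ℝ)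
    (G : Matrix (Fin m) (Fin n) ℝ → Matrix (Fin m) (Fin n) ℝ)
    (hgrad : ∀ (A B : Matrix (Fin m) (Fin n) ℝ) (t : ℝ),
      HasDerivAt (fun s : ℝ => g (A + s • B)) (frobInner (G (A + t • B)) B) t)
    (hLip : ∀ A A' : Matrix (Fin m) (Fin n) ℝ,
      frobNorm (G A' - G A) ≤ 2 * β * frobNorm (A' - A))
    (A : Matrix (Fin m) (Fin n) ℝ)
    (lam : Fin r' → ℝ) (u : Fin r' → Fin m → ℝ) (v : Fin r' → Fin n → ℝ)
    (hA : A = ∑ j, lam j • Matrix.vecMulVec (u j) (v j))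
    (hu : ∀ j k, u j ⬝ᵥ u k = if j = k then (1 : ℝ) else 0)
    (hv : ∀ j k, v j ⬝ᵥ v k = if j = k then (1 : ℝ) else 0)
    (hlam : ∀ j, 0 < lam j)
    (hproj : ∀ j k, u j ⬝ᵥ (G A).mulVec (v k) = 0)
    (σ : ℝ) (p : Fin m → ℝ) (q : Fin n → ℝ)
    (hp : p ⬝ᵥ p = 1) (hq : q ⬝ᵥ q = 1)
    (hσ : frobInner (G A) (Matrix.vecMulVec p q) = σ)
    (hσtop : ∀ (p' : Fin m → ℝ) (q' : Fin n → ℝ), p' ⬝ᵥ p' = 1 → q' ⬝ᵥ q' = 1 →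
      frobInner (G A) (Matrix.vecMulVec p' q') ≤ σ)
    (j : Fin r') (hj : ∀ k, lam j ≤ lam k)
    (A' : Matrix (Fin m) (Fin n) ℝ)
    (hA' : A' = A - (2 * β)⁻¹ • (σ • Matrix.vecMulVec p q)
        - lam j • Matrix.vecMulVec (u j) (v j)) :
    g A' - g A ≤ -(8 * β)⁻¹ * σ ^ 2 + 2 * β * lam j ^ 2 :=
  low_rank_step_progress_general m n r' β hβ g G hgrad hLip A lam u v hu hv hproj σ p q hp hq hσ
    hσtop j A' hA'
end
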